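/- arXiv:2402.04114 — 3 statements merged into one kernel-verified Lean document; each statement's English description precedes it below -/
import Mathlib

section
/- Let Z be a random element of a measurable space with law π and let A : Z → ℝ^{d×d} be measurable with E[‖A(Z)‖²] < ∞. Let a, L > 0 and assume that a·I ⪯ E[(A(Z) + A(Z)ᵀ)/2] and (1/L)·E[A(Z)ᵀ A(Z)] ⪯ E[(A(Z) + A(Z)ᵀ)/2] in the positive-semidefinite (Loewner) order. Then for every η ≥ 0 and every u ∈ ℝ^d, E[‖(I − η A(Z)) u‖²] ≤ (1 − ηa)‖u‖² − η(1/L − η)·E[‖A(Z)u‖²]. -/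
open MeasureTheory
open scoped RealInnerProductSpace

/-! Expanding the square, `E‖(I - ηA)u‖² = ‖u‖² - 2η E⟪u, Au⟫ + η² E‖Au‖²`. The quadratic forms
of `E[(A + Aᵀ)/2]` and `E[AᵀA]` at `u` are `E⟪u, Au⟫` and `E‖Au‖²`, so adding the two Loewner
bounds gives `2 E⟪u, Au⟫ ≥ a‖u‖² + E‖Au‖²/L`, which is exactly what the claimed bound needs. -/

section

variable {E : Type*} [NormedAddCommGroup E] [InnerProductSpace ℝ E]
  {Z : Type*} [MeasurableSpace Z] {μ : Measure Z}

theorem norm_one_sub_smul_apply_sq (T : E →L[ℝ] E) (η : ℝ) (u : E) :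
    ‖((1 : E →L[ℝ] E) - η • T) u‖ ^ 2 = ‖u‖ ^ 2 - 2 * η * ⟪u, T u⟫ + η ^ 2 * ‖T u‖ ^ 2 := by
  rw [sub_apply, one_apply_eq_self, smul_apply, norm_sub_sq_real, real_inner_smul_right,
    norm_smul, mul_pow, Real.norm_eq_abs, sq_abs]
  ring

theorem integral_norm_one_sub_smul_apply_sq [IsProbabilityMeasure μ] {A : Z → E →L[ℝ] E}
    (hA : MemLp A 2 μ) (η : ℝ) (u : E) :
    ∫ z, ‖((1 : E →L[ℝ] E) - η • A z) u‖ ^ 2 ∂μ =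
      ‖u‖ ^ 2 - 2 * η * ∫ z, ⟪u, A z u⟫ ∂μ + η ^ 2 * ∫ z, ‖A z u‖ ^ 2 ∂μ := by
  have hAu : MemLp (fun z => A z u) 2 μ :=
    hA.continuousLinearMap_comp (ContinuousLinearMap.apply ℝ E u)
  have hinner : Integrable (fun z => ⟪u, A z u⟫) μ :=
    (hAu.integrable one_le_two).const_inner u
  have hsq : Integrable (fun z => ‖A z u‖ ^ 2) μ :=
    (memLp_two_iff_integrable_sq_norm hAu.1).1 hAu
  simp_rw [norm_one_sub_smul_apply_sq]
  rw [integral_add (f := fun z => ‖u‖ ^ 2 - 2 * η * ⟪u, A z u⟫)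
      ((integrable_const _).sub (hinner.const_mul _)) (hsq.const_mul _),
    integral_sub (integrable_const _) (hinner.const_mul _), integral_const, integral_const_mul,
    integral_const_mul, probReal_univ, one_smul]

variable [CompleteSpace E]

theorem inner_half_add_adjoint_apply_self (T : E →L[ℝ] E) (u : E) :
    ⟪u, ((2 : ℝ)⁻¹ • (T + ContinuousLinearMap.adjoint T)) u⟫ = ⟪u, T u⟫ := by
  rw [smul_apply, add_apply, real_inner_smul_right, inner_add_right,
    ContinuousLinearMap.adjoint_inner_right, real_inner_comm (T u)]
  ring

theorem memLp_adjoint {p : ENNReal} {A : Z → E →L[ℝ] E} (hA : MemLp A p μ) :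
    MemLp (fun z => ContinuousLinearMap.adjoint (A z)) p μ :=
  ContinuousLinearMap.adjoint.lipschitz.comp_memLp (map_zero _) hA

theorem integrable_adjoint_comp_self {A : Z → E →L[ℝ] E} (hA : MemLp A 2 μ) :
    Integrable (fun z => (ContinuousLinearMap.adjoint (A z)).comp (A z)) μ :=
  memLp_one_iff_integrable.1 <|
    (ContinuousLinearMap.compL ℝ E E E).memLp_of_bilin 1 (memLp_adjoint hA) hA

theorem inner_integral_apply {T : Z → E →L[ℝ] E} (hT : Integrable T μ) (u v : E) :
    ⟪v, (∫ z, T z ∂μ) u⟫ = ∫ z, ⟪v, T z u⟫ ∂μ := by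
  rw [ContinuousLinearMap.integral_apply hT, integral_inner (hT.apply_continuousLinearMap u)]

theorem inner_integral_half_add_adjoint_apply_self [IsFiniteMeasure μ] {A : Z → E →L[ℝ] E}
    (hA : MemLp A 2 μ) (u : E) :
    ⟪u, (∫ z, (2 : ℝ)⁻¹ • (A z + ContinuousLinearMap.adjoint (A z)) ∂μ) u⟫ =
      ∫ z, ⟪u, A z u⟫ ∂μ := by
  have hA_int := hA.integrable one_le_two
  have hadj_int := (memLp_adjoint hA).integrable one_le_two
  have hsym : Integrable (fun z => (2 : ℝ)⁻¹ • (A z + ContinuousLinearMap.adjoint (A z))) μ := by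
    fun_prop
  simp_rw [inner_integral_apply hsym, inner_half_add_adjoint_apply_self]

theorem inner_integral_adjoint_comp_self_apply {A : Z → E →L[ℝ] E} (hA : MemLp A 2 μ) (u : E) :
    ⟪u, (∫ z, (ContinuousLinearMap.adjoint (A z)).comp (A z) ∂μ) u⟫ = ∫ z, ‖A z u‖ ^ 2 ∂μ := by
  simp_rw [inner_integral_apply (integrable_adjoint_comp_self hA), ContinuousLinearMap.comp_apply,
    ContinuousLinearMap.adjoint_inner_right, real_inner_self_eq_norm_sq]

end

theorem one_step_contraction_with_La_general
    (d : ℕ)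
    {Zsp : Type} [MeasurableSpace Zsp] (π : Measure Zsp) [IsProbabilityMeasure π]
    (A : Zsp → (EuclideanSpace ℝ (Fin d) →L[ℝ] EuclideanSpace ℝ (Fin d)))
    (hAmeas : AEStronglyMeasurable A π)
    (hA2 : Integrable (fun z => ‖A z‖ ^ 2) π)
    (a L : ℝ)
    (hlow : ∀ u : EuclideanSpace ℝ (Fin d),
      a * ‖u‖ ^ 2 ≤
        ⟪u, (∫ z, (2 : ℝ)⁻¹ • (A z + ContinuousLinearMap.adjoint (A z)) ∂π) u⟫)
    (hup : ∀ u : EuclideanSpace ℝ (Fin d),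
      (1 / L) * ⟪u, (∫ z, (ContinuousLinearMap.adjoint (A z)).comp (A z) ∂π) u⟫ ≤
        ⟪u, (∫ z, (2 : ℝ)⁻¹ • (A z + ContinuousLinearMap.adjoint (A z)) ∂π) u⟫) :
    ∀ η : ℝ, 0 ≤ η → ∀ u : EuclideanSpace ℝ (Fin d),
      (∫ z, ‖((1 : EuclideanSpace ℝ (Fin d) →L[ℝ] EuclideanSpace ℝ (Fin d))
          - η • A z) u‖ ^ 2 ∂π) ≤
        (1 - η * a) * ‖u‖ ^ 2 - η * (1 / L - η) * ∫ z, ‖A z u‖ ^ 2 ∂π := by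
  intro η hη u
  have hA : MemLp A 2 π := (memLp_two_iff_integrable_sq_norm hAmeas).2 hA2
  have hlow_u := hlow u
  have hup_u := hup u
  rw [inner_integral_half_add_adjoint_apply_self hA] at hlow_u hup_u
  rw [inner_integral_adjoint_comp_self_apply hA] at hup_u
  rw [integral_norm_one_sub_smul_apply_sq hA]
  linarith [mul_le_mul_of_nonneg_left hlow_u hη, mul_le_mul_of_nonneg_left hup_u hη]

/-- Under the Loewner-order hypotheses
`a·I ⪯ E[(A(Z) + A(Z)ᵀ)/2]` and `(1/L)·E[A(Z)ᵀA(Z)] ⪯ E[(A(Z) + A(Z)ᵀ)/2]`,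
for every `η ≥ 0` and every `u ∈ ℝ^d`,
`E[‖(I − ηA(Z))u‖²] ≤ (1 − ηa)‖u‖² − η(1/L − η) E[‖A(Z)u‖²]`. -/
theorem one_step_contraction_with_La
    (d : ℕ) (hd : 1 ≤ d)
    {Zsp : Type} [MeasurableSpace Zsp] (π : Measure Zsp) [IsProbabilityMeasure π]
    (A : Zsp → (EuclideanSpace ℝ (Fin d) →L[ℝ] EuclideanSpace ℝ (Fin d)))
    (hAmeas : AEStronglyMeasurable A π)
    (hA2 : Integrable (fun z => ‖A z‖ ^ 2) π)
    (a L : ℝ) (ha : 0 < a) (hL : 0 < L)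
    (hlow : ∀ u : EuclideanSpace ℝ (Fin d),
      a * ‖u‖ ^ 2 ≤
        ⟪u, (∫ z, (2 : ℝ)⁻¹ • (A z + ContinuousLinearMap.adjoint (A z)) ∂π) u⟫)
    (hup : ∀ u : EuclideanSpace ℝ (Fin d),
      (1 / L) * ⟪u, (∫ z, (ContinuousLinearMap.adjoint (A z)).comp (A z) ∂π) u⟫ ≤
        ⟪u, (∫ z, (2 : ℝ)⁻¹ • (A z + ContinuousLinearMap.adjoint (A z)) ∂π) u⟫) :
    ∀ η : ℝ, 0 ≤ η → ∀ u : EuclideanSpace ℝ (Fin d),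
      (∫ z, ‖((1 : EuclideanSpace ℝ (Fin d) →L[ℝ] EuclideanSpace ℝ (Fin d))
          - η • A z) u‖ ^ 2 ∂π) ≤
        (1 - η * a) * ‖u‖ ^ 2 - η * (1 / L - η) * ∫ z, ‖A z u‖ ^ 2 ∂π :=
  one_step_contraction_with_La_general d π A hAmeas hA2 a L hlow hup
end

section
/- For every integer H ≥ 2 and every real number u, the binomial remainder satisfies |∑_{k=0}^{H−2} (−1)^k · C(H, k+2) · u^k| ≤ (H²/2) · exp((H−2)|u|); consequently |1 − (1−u)^H − H·u| ≤ (u²H²/2) · exp((H−2)|u|). -/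
private lemma choose_key (m k : ℕ) :
    (m + 2).choose (k + 2) * ((k + 2) * (k + 1)) = (m + 2) * (m + 1) * m.choose k := by
  have h1 : (m + 2) * (m + 1).choose (k + 1) = (m + 2).choose (k + 2) * (k + 2) := by
    simpa [Nat.succ_eq_add_one] using Nat.add_one_mul_choose_eq (m + 1) (k + 1)
  have h2 : (m + 1) * m.choose k = (m + 1).choose (k + 1) * (k + 1) := by
    simpa [Nat.succ_eq_add_one] using Nat.add_one_mul_choose_eq m k
  ring_nf
  ring_nf at h1 h2
  nlinarith [h1, h2]

private lemma choose_bound (m k : ℕ) :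
    2 * (m + 2).choose (k + 2) ≤ (m + 2) * (m + 2) * m.choose k := by
  have h := choose_key m k
  have h2 : 2 ≤ (k + 2) * (k + 1) := by nlinarith
  calc 2 * (m + 2).choose (k + 2) ≤ (m + 2).choose (k + 2) * ((k + 2) * (k + 1)) := by
        nlinarith [Nat.zero_le ((m + 2).choose (k + 2))]
    _ = (m + 2) * (m + 1) * m.choose k := h
    _ ≤ (m + 2) * (m + 2) * m.choose k := by
        have : (m + 2) * (m + 1) ≤ (m + 2) * (m + 2) := by nlinarith
        exact Nat.mul_le_mul_right _ this

/-- For every integer `H ≥ 2` and every real `u`,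
`|∑_{k=0}^{H−2} (−1)^k C(H, k+2) u^k| ≤ (H²/2) exp((H−2)|u|)`, and consequently
`|1 − (1−u)^H − Hu| ≤ (u²H²/2) exp((H−2)|u|)`. -/
theorem binomial_remainder_bound (H : ℕ) (hH : 2 ≤ H) (u : ℝ) :
    |∑ k ∈ Finset.range (H - 1), (-1 : ℝ) ^ k * (H.choose (k + 2) : ℝ) * u ^ k| ≤
        (H : ℝ) ^ 2 / 2 * Real.exp (((H : ℝ) - 2) * |u|) ∧
      |1 - (1 - u) ^ H - (H : ℝ) * u| ≤
        u ^ 2 * (H : ℝ) ^ 2 / 2 * Real.exp (((H : ℝ) - 2) * |u|) := by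
  obtain ⟨m, rfl⟩ : ∃ m, H = m + 2 := ⟨H - 2, by omega⟩
  have hrange : m + 2 - 1 = m + 1 := by omega
  set S : ℝ := ∑ k ∈ Finset.range (m + 2 - 1),
      (-1 : ℝ) ^ k * ((m + 2).choose (k + 2) : ℝ) * u ^ k with hS
  have hcast : ((m + 2 : ℕ) : ℝ) - 2 = (m : ℕ) := by push_cast; ring
  -- First inequality
  have h1 : |S| ≤ ((m + 2 : ℕ) : ℝ) ^ 2 / 2 * Real.exp ((((m + 2 : ℕ) : ℝ) - 2) * |u|) := by
    rw [hS, hrange, hcast]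
    calc |∑ k ∈ Finset.range (m + 1), (-1 : ℝ) ^ k * ((m + 2).choose (k + 2) : ℝ) * u ^ k|
        ≤ ∑ k ∈ Finset.range (m + 1), |(-1 : ℝ) ^ k * ((m + 2).choose (k + 2) : ℝ) * u ^ k| :=
          Finset.abs_sum_le_sum_abs _ _
      _ = ∑ k ∈ Finset.range (m + 1), ((m + 2).choose (k + 2) : ℝ) * |u| ^ k := by
          refine Finset.sum_congr rfl fun k _ => ?_
          rw [abs_mul, abs_mul, abs_pow, abs_pow, abs_neg, abs_one, one_pow, one_mul,
            Nat.abs_cast]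
      _ ≤ ∑ k ∈ Finset.range (m + 1),
            ((m + 2 : ℕ) : ℝ) ^ 2 / 2 * ((m.choose k : ℝ) * |u| ^ k) := by
          refine Finset.sum_le_sum fun k _ => ?_
          have hn := choose_bound m k
          have hn' : (2 * (m + 2).choose (k + 2) : ℝ) ≤ ((m + 2) * (m + 2) * m.choose k : ℝ) := by
            exact_mod_cast hn
          have hu : (0 : ℝ) ≤ |u| ^ k := by positivity
          push_cast at hn' ⊢
          nlinarith [hn', hu, mul_le_mul_of_nonneg_right hn' hu]
      _ = ((m + 2 : ℕ) : ℝ) ^ 2 / 2 * ∑ k ∈ Finset.range (m + 1), (m.choose k : ℝ) * |u| ^ k :=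
          by rw [Finset.mul_sum]
      _ = ((m + 2 : ℕ) : ℝ) ^ 2 / 2 * (|u| + 1) ^ m := by
          rw [add_pow]
          congr 1
          refine Finset.sum_congr rfl fun k _ => ?_
          rw [one_pow]; ring
      _ ≤ ((m + 2 : ℕ) : ℝ) ^ 2 / 2 * Real.exp (((m : ℕ) : ℝ) * |u|) := by
          refine mul_le_mul_of_nonneg_left ?_ (by positivity)
          have h1 : (|u| + 1) ≤ Real.exp |u| := by
            have := Real.add_one_le_exp |u|; linarith
          calc (|u| + 1) ^ m ≤ Real.exp |u| ^ m :=
                pow_le_pow_left₀ (by positivity) h1 m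
            _ = Real.exp (((m : ℕ) : ℝ) * |u|) := by
                rw [← Real.exp_nat_mul]
  refine ⟨h1, ?_⟩
  -- Identity : 1 - (1-u)^(m+2) - (m+2) u = -u^2 * S
  have hid : 1 - (1 - u) ^ (m + 2) - ((m + 2 : ℕ) : ℝ) * u = -(u ^ 2 * S) := by
    have hexp : (1 - u) ^ (m + 2) =
        ∑ j ∈ Finset.range (m + 3), (-u) ^ j * (1 : ℝ) ^ (m + 2 - j) * ((m + 2).choose j : ℝ) := by
      rw [show (1 : ℝ) - u = -u + 1 by ring, add_pow]
    rw [hexp, Finset.sum_range_succ' _ (m + 2), Finset.sum_range_succ' _ (m + 1)]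
    rw [hS, hrange]
    have hterm : ∀ k ∈ Finset.range (m + 1),
        (-u) ^ (k + 1 + 1) * (1:ℝ) ^ (m + 2 - (k + 1 + 1)) * ((m + 2).choose (k + 1 + 1) : ℝ)
          = u ^ 2 * ((-1 : ℝ) ^ k * ((m + 2).choose (k + 2) : ℝ) * u ^ k) := by
      intro k _
      have hpow : ((-1 : ℝ)) ^ (k + 2) = (-1 : ℝ) ^ k := by
        rw [pow_add]; simp
      rw [one_pow, show (-u : ℝ) = (-1) * u by ring, mul_pow, show k + 1 + 1 = k + 2 from rfl,
        hpow]
      ring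
    rw [Finset.sum_congr rfl hterm]
    simp only [Nat.choose_zero_right, Nat.choose_one_right, one_pow, pow_zero, pow_one,
      Nat.cast_one, zero_add]
    push_cast
    rw [Finset.mul_sum]
    ring
  have h2 : |1 - (1 - u) ^ (m + 2) - ((m + 2 : ℕ) : ℝ) * u| = u ^ 2 * |S| := by
    rw [hid, abs_neg, abs_mul, abs_of_nonneg (sq_nonneg u)]
  rw [h2]
  have husq : (0 : ℝ) ≤ u ^ 2 := sq_nonneg u
  calc u ^ 2 * |S| ≤ u ^ 2 * (((m + 2 : ℕ) : ℝ) ^ 2 / 2 *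
        Real.exp ((((m + 2 : ℕ) : ℝ) - 2) * |u|)) := mul_le_mul_of_nonneg_left h1 husq
    _ = u ^ 2 * ((m + 2 : ℕ) : ℝ) ^ 2 / 2 * Real.exp ((((m + 2 : ℕ) : ℝ) - 2) * |u|) := by ring
end

section
/- Let (S,𝒮) be a measurable state space, γ ∈ (0,1), and φ : S → ℝ^d measurable with ‖φ(s)‖ ≤ 1 for all s ∈ S. Let (S_0, S_1) be a random pair such that S_0 and S_1 have the same marginal law μ on S. Set Σ_φ = E[φ(S_0)φ(S_0)ᵀ], assume ν = λ_min(Σ_φ) > 0, and define the random TD(0) matrix A = φ(S_0)(φ(S_0) − γ φ(S_1))ᵀ. Then: (i) ‖A‖ ≤ 1 + γ almost surely; (ii) the matrix-noise covariance Σ_A = E[(A − E[A])(A − E[A])ᵀ] satisfies ‖Σ_A‖ ≤ 2(1+γ)²; and (iii) for every step size η ∈ (0, (1−γ)/4] and every u ∈ ℝ^d, (E[‖(I − ηA)u‖²])^{1/2} ≤ (1 − η(1−γ)ν/2)‖u‖, i.e. TD(0) satisfies the exponential stability assumption with a = (1−γ)ν/2 and η∞ = (1−γ)/4. -/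
open MeasureTheory
open scoped RealInnerProductSpace

noncomputable section

/-- Euclidean space `ℝ^d`. -/
abbrev Euc (d : ℕ) := EuclideanSpace ℝ (Fin d)

/-- Linear operators on `ℝ^d`, carrying the operator norm. -/
abbrev Op (d : ℕ) := Euc d →L[ℝ] Euc d

/-- Outer product `v wᵀ` as an operator on `ℝ^d`. -/
def outer2 {d : ℕ} (v w : Euc d) : Op d := (innerSL ℝ w).smulRight v

/-- The random TD(0) matrix `A = φ(S₀)(φ(S₀) − γφ(S₁))ᵀ`. -/
def tdMat {d : ℕ} {S Ω : Type} (φ : S → Euc d) (γ : ℝ) (S0 S1 : Ω → S) (ω : Ω) : Op d :=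
  outer2 (φ (S0 ω)) (φ (S0 ω) - γ • φ (S1 ω))

/-- Feature covariance matrix `Σ_φ = E[φ(S₀)φ(S₀)ᵀ]`. -/
def featCov {d : ℕ} {S Ω : Type} [MeasurableSpace Ω] (P : Measure Ω)
    (φ : S → Euc d) (S0 : Ω → S) : Op d :=
  ∫ ω, outer2 (φ (S0 ω)) (φ (S0 ω)) ∂P

/-- Smallest eigenvalue of a (self-adjoint) operator, as the infimum of its Rayleigh quotient
over the unit sphere. -/
def lambdaMin {d : ℕ} (M : Op d) : ℝ :=
  ⨅ u : {u : Euc d // ‖u‖ = 1}, ⟪(u : Euc d), M (u : Euc d)⟫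

/-!
(i) is `‖φ(S₀)‖ ‖φ(S₀) - γ φ(S₁)‖ ≤ 1 + γ`. (ii) Expanding the square,
`E[(A - EA)(A - EA)*] = E[A A*] - EA (EA)*`, and both terms have norm at most `(1 + γ)²`.
(iii) Put `X = ⟪φ(S₀), u⟫`, `Y = ⟪φ(S₁), u⟫` and `q = E[X²] = ⟪u, Σ_φ u⟫ ≥ ν‖u‖²`; stationarity
gives `E[Y²] = q`. Then `‖(I - ηA)u‖² = ‖u‖² - 2η(X - γY)X + η²(X - γY)²‖φ(S₀)‖²`, and by
`2XY ≤ X² + Y²` the middle term has mean at least `2η(1 - γ)q` and the last one at most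
`η²(1 + γ)²q`. For `η(1 + γ)² ≤ 1 - γ` this gives
`E‖(I - ηA)u‖² ≤ ‖u‖² - η(1 - γ)q ≤ (1 - η(1 - γ)ν)‖u‖² ≤ ((1 - η(1 - γ)ν/2)‖u‖)²`.
-/

def compAdjointL (E : Type*) [NormedAddCommGroup E] [InnerProductSpace ℝ E] [CompleteSpace E] :
    (E →L[ℝ] E) →L[ℝ] (E →L[ℝ] E) →L[ℝ] (E →L[ℝ] E) :=
  LinearMap.mkContinuous₂
    (LinearMap.mk₂ ℝ (fun M N => M.comp (ContinuousLinearMap.adjoint N))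
      (fun _ _ _ => ContinuousLinearMap.add_comp _ _ _)
      (fun _ _ _ => ContinuousLinearMap.smul_comp _ _ _)
      (fun _ _ _ => by simp [ContinuousLinearMap.comp_add])
      (fun _ _ _ => by simp))
    1 fun M N => by
      simpa using M.opNorm_comp_le (ContinuousLinearMap.adjoint N)

lemma norm_compAdjointL_apply_le {E : Type*} [NormedAddCommGroup E] [InnerProductSpace ℝ E]
    [CompleteSpace E] (M N : E →L[ℝ] E) : ‖compAdjointL E M N‖ ≤ ‖M‖ * ‖N‖ :=
  (M.opNorm_comp_le _).trans_eq (by rw [ContinuousLinearMap.adjoint.norm_map])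

section
variable {Ω : Type*} [MeasurableSpace Ω] {P : Measure Ω} [IsProbabilityMeasure P]

theorem integral_bilin_centered {E F : Type*} [NormedAddCommGroup E] [NormedSpace ℝ E]
    [CompleteSpace E] [NormedAddCommGroup F] [NormedSpace ℝ F] [CompleteSpace F]
    (β : E →L[ℝ] E →L[ℝ] F) {X : Ω → E} (hX : Integrable X P)
    (hXX : Integrable (fun ω => β (X ω) (X ω)) P) :
    ∫ ω, β (X ω - ∫ ω', X ω' ∂P) (X ω - ∫ ω', X ω' ∂P) ∂P =
      ∫ ω, β (X ω) (X ω) ∂P - β (∫ ω, X ω ∂P) (∫ ω, X ω ∂P) := by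
  set m := ∫ ω, X ω ∂P
  have hexpand : ∀ ω, β (X ω - m) (X ω - m) =
      β (X ω) (X ω) - β.flip m (X ω) - β m (X ω) + β m m := fun ω => by
    simp only [map_sub, sub_apply, ContinuousLinearMap.flip_apply]
    abel
  have h1 := (β.flip m).integrable_comp hX
  have h2 := (β m).integrable_comp hX
  have h12 : Integrable (fun ω => β (X ω) (X ω) - β.flip m (X ω)) P := hXX.sub h1
  have h123 : Integrable (fun ω => β (X ω) (X ω) - β.flip m (X ω) - β m (X ω)) P := h12.sub h2
  simp only [hexpand]
  rw [integral_add h123 (integrable_const _), integral_sub h12 h2,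
    integral_sub hXX h1, (β.flip m).integral_comp_comm hX, (β m).integral_comp_comm hX,
    integral_const, probReal_univ, one_smul, ContinuousLinearMap.flip_apply]
  abel

variable {E : Type*} [NormedAddCommGroup E] [InnerProductSpace ℝ E] [CompleteSpace E]

theorem norm_integral_centered_comp_adjoint_le {A : Ω → E →L[ℝ] E}
    (hA : AEStronglyMeasurable A P) {C : ℝ} (hAC : ∀ᵐ ω ∂P, ‖A ω‖ ≤ C) :
    ‖∫ ω, (A ω - ∫ ω', A ω' ∂P).comp
        (ContinuousLinearMap.adjoint (A ω - ∫ ω', A ω' ∂P)) ∂P‖ ≤ 2 * C ^ 2 := by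
  have hsq : ∀ M N : E →L[ℝ] E, ‖M‖ ≤ C → ‖N‖ ≤ C → ‖compAdjointL E M N‖ ≤ C ^ 2 :=
    fun M N hM hN => (norm_compAdjointL_apply_le M N).trans <| by
      rw [sq]; exact mul_le_mul hM hN (norm_nonneg N) ((norm_nonneg M).trans hM)
  have hAA : ∀ᵐ ω ∂P, ‖compAdjointL E (A ω) (A ω)‖ ≤ C ^ 2 :=
    hAC.mono fun ω hω => hsq _ _ hω hω
  have hAA_int : Integrable (fun ω => compAdjointL E (A ω) (A ω)) P :=
    .of_bound ((compAdjointL E).continuous₂.comp_aestronglyMeasurable₂ hA hA) _ hAA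
  have hmean : ‖∫ ω, A ω ∂P‖ ≤ C := (norm_integral_le_of_norm_le_const hAC).trans (by simp)
  calc _ = ‖∫ ω, compAdjointL E (A ω) (A ω) ∂P -
          compAdjointL E (∫ ω, A ω ∂P) (∫ ω, A ω ∂P)‖ :=
        congrArg norm (integral_bilin_centered _ (.of_bound hA C hAC) hAA_int)
    _ ≤ C ^ 2 + C ^ 2 :=
        (norm_sub_le _ _).trans (add_le_add
          ((norm_integral_le_of_norm_le_const hAA).trans (by simp)) (hsq _ _ hmean hmean))
    _ = 2 * C ^ 2 := by ring

end

lemma lambdaMin_mul_sq_le {d : ℕ} (M : Op d) (u : Euc d) :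
    lambdaMin M * ‖u‖ ^ 2 ≤ ⟪u, M u⟫ := by
  rcases eq_or_ne u 0 with rfl | hu
  · simp
  have hbdd : BddBelow (Set.range fun v : {v : Euc d // ‖v‖ = 1} => ⟪(v : Euc d), M v⟫) := by
    refine ⟨-‖M‖, ?_⟩
    rintro _ ⟨⟨v, hv⟩, rfl⟩
    have hle : |⟪v, M v⟫| ≤ ‖v‖ * (‖M‖ * ‖v‖) := (abs_real_inner_le_norm v (M v)).trans
      (mul_le_mul_of_nonneg_left (M.le_opNorm v) (norm_nonneg v))
    simp only [hv, one_mul, mul_one] at hle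
    exact neg_le_of_abs_le hle
  have hinf := ciInf_le hbdd ⟨_, norm_smul_inv_norm (𝕜 := ℝ) hu⟩
  simp only [map_smul, real_inner_smul_left, real_inner_smul_right] at hinf
  have hu' : 0 < ‖u‖ := norm_pos_iff.mpr hu
  calc lambdaMin M * ‖u‖ ^ 2 ≤ ‖u‖⁻¹ * (‖u‖⁻¹ * ⟪u, M u⟫) * ‖u‖ ^ 2 := by
        gcongr; exact hinf
    _ = ⟪u, M u⟫ := by field_simp

section
variable {d : ℕ}

lemma outer2_apply (v w u : Euc d) : outer2 v w u = ⟪w, u⟫ • v := rfl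

lemma norm_outer2 (v w : Euc d) : ‖outer2 v w‖ = ‖v‖ * ‖w‖ := by
  rw [outer2, ContinuousLinearMap.norm_smulRight_apply, innerSL_apply_norm, mul_comm]

lemma continuous_outer2 : Continuous (Function.uncurry (outer2 (d := d))) := by
  unfold outer2; fun_prop

lemma norm_one_sub_smul_outer2_apply_sq (η : ℝ) (v w u : Euc d) :
    ‖((1 : Op d) - η • outer2 v w) u‖ ^ 2 =
      ‖u‖ ^ 2 - 2 * η * (⟪w, u⟫ * ⟪v, u⟫) + η ^ 2 * (⟪w, u⟫ ^ 2 * ‖v‖ ^ 2) := by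
  have happ : ((1 : Op d) - η • outer2 v w) u = u - (η * ⟪w, u⟫) • v := by
    simp [outer2_apply, smul_smul]
  rw [happ, norm_sub_sq_real, real_inner_smul_right, norm_smul, Real.norm_eq_abs, mul_pow, sq_abs,
    real_inner_comm v u]
  ring

variable {Ω : Type*} [MeasurableSpace Ω] {P : Measure Ω}

lemma inner_integral_outer2_self_apply {x : Ω → Euc d}
    (hx : Integrable (fun ω => outer2 (x ω) (x ω)) P) (u : Euc d) :
    ⟪u, (∫ ω, outer2 (x ω) (x ω) ∂P) u⟫ = ∫ ω, ⟪x ω, u⟫ ^ 2 ∂P := by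
  rw [ContinuousLinearMap.integral_apply hx, ← integral_inner (hx.apply_continuousLinearMap u)]
  simp only [outer2_apply, inner_smul_right, real_inner_comm u, sq]

lemma aestronglyMeasurable_outer2 {v w : Ω → Euc d} (hv : AEStronglyMeasurable v P)
    (hw : AEStronglyMeasurable w P) : AEStronglyMeasurable (fun ω => outer2 (v ω) (w ω)) P :=
  continuous_outer2.comp_aestronglyMeasurable₂ hv hw

lemma integrable_inner_sq [IsFiniteMeasure P] {x : Ω → Euc d} (hx : AEStronglyMeasurable x P)
    (hx1 : ∀ ω, ‖x ω‖ ≤ 1) (u : Euc d) : Integrable (fun ω => ⟪x ω, u⟫ ^ 2) P := by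
  have hmeas : AEStronglyMeasurable (fun ω => ⟪x ω, u⟫ ^ 2) P :=
    (hx.inner aestronglyMeasurable_const).pow 2
  refine .of_bound hmeas (‖u‖ ^ 2) (ae_of_all _ fun ω => ?_)
  have h : |⟪x ω, u⟫| ≤ ‖u‖ := (abs_real_inner_le_norm (x ω) u).trans
    (mul_le_of_le_one_left (norm_nonneg u) (hx1 ω))
  rw [norm_pow, Real.norm_eq_abs]
  exact pow_le_pow_left₀ (abs_nonneg _) h 2

lemma integral_norm_one_sub_smul_outer2_apply_sq_le [IsProbabilityMeasure P] {x y : Ω → Euc d}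
    (hx : AEStronglyMeasurable x P) (hy : AEStronglyMeasurable y P)
    (hx1 : ∀ ω, ‖x ω‖ ≤ 1) (hy1 : ∀ ω, ‖y ω‖ ≤ 1) (u : Euc d)
    (hxy : ∫ ω, ⟪y ω, u⟫ ^ 2 ∂P = ∫ ω, ⟪x ω, u⟫ ^ 2 ∂P) {γ η : ℝ} (hγ : 0 ≤ γ) (hη : 0 ≤ η) :
    ∫ ω, ‖((1 : Op d) - η • outer2 (x ω) (x ω - γ • y ω)) u‖ ^ 2 ∂P ≤
      ‖u‖ ^ 2 - η * (2 * (1 - γ) - η * (1 + γ) ^ 2) * ∫ ω, ⟪x ω, u⟫ ^ 2 ∂P := by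
  -- the coefficients left after `2XY ≤ X² + Y²` and `(X - γY)² ≤ (1 + γ)(X² + γY²)`
  set a := η * (γ - 2) + η ^ 2 * (1 + γ)
  set b := η * γ + η ^ 2 * γ * (1 + γ)
  have hX := integrable_inner_sq hx hx1 u
  have hY := integrable_inner_sq hy hy1 u
  have hXY : Integrable (fun ω => a * ⟪x ω, u⟫ ^ 2 + b * ⟪y ω, u⟫ ^ 2) P :=
    (hX.const_mul a).add (hY.const_mul b)
  have hpt : ∀ ω, ‖((1 : Op d) - η • outer2 (x ω) (x ω - γ • y ω)) u‖ ^ 2 ≤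
      ‖u‖ ^ 2 + (a * ⟪x ω, u⟫ ^ 2 + b * ⟪y ω, u⟫ ^ 2) := fun ω => by
    rw [norm_one_sub_smul_outer2_apply_sq, inner_sub_left, real_inner_smul_left]
    set X := ⟪x ω, u⟫
    set Y := ⟪y ω, u⟫
    have hw : ‖x ω‖ ^ 2 ≤ 1 := pow_le_one₀ (norm_nonneg _) (hx1 ω)
    have hamgm : 2 * X * Y ≤ X ^ 2 + Y ^ 2 := by nlinarith [sq_nonneg (X - Y)]
    have hcs : (X - γ * Y) ^ 2 ≤ (1 + γ) * (X ^ 2 + γ * Y ^ 2) := by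
      nlinarith [mul_nonneg hγ (sq_nonneg (X + Y))]
    nlinarith [mul_le_mul_of_nonneg_left hamgm (mul_nonneg hη hγ),
      mul_le_mul_of_nonneg_left hcs (sq_nonneg η),
      mul_le_mul_of_nonneg_left hw (mul_nonneg (sq_nonneg η) (sq_nonneg (X - γ * Y)))]
  calc _ ≤ ∫ ω, ‖u‖ ^ 2 + (a * ⟪x ω, u⟫ ^ 2 + b * ⟪y ω, u⟫ ^ 2) ∂P :=
        integral_mono_of_nonneg (ae_of_all _ fun ω => sq_nonneg _)
          ((integrable_const _).add hXY) (ae_of_all _ hpt)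
    _ = ‖u‖ ^ 2 + (a + b) * ∫ ω, ⟪x ω, u⟫ ^ 2 ∂P := by
        rw [integral_add (integrable_const _) hXY,
          integral_add (hX.const_mul a) (hY.const_mul b), integral_const_mul, integral_const_mul,
          hxy, integral_const, probReal_univ, one_smul]
        ring
    _ = _ := by ring

end

lemma norm_tdMat_le {d : ℕ} {S Ω : Type} {φ : S → Euc d} (hφ : ∀ s, ‖φ s‖ ≤ 1) {γ : ℝ}
    (hγ : 0 ≤ γ) (S0 S1 : Ω → S) (ω : Ω) : ‖tdMat φ γ S0 S1 ω‖ ≤ 1 + γ := by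
  have hdiff : ‖φ (S0 ω) - γ • φ (S1 ω)‖ ≤ 1 + γ := by
    refine (norm_sub_le _ _).trans (add_le_add (hφ _) ?_)
    rw [norm_smul, Real.norm_of_nonneg hγ]
    exact mul_le_of_le_one_right hγ (hφ _)
  rw [tdMat, norm_outer2]
  exact (mul_le_of_le_one_left (norm_nonneg _) (hφ _)).trans hdiff

lemma sqrt_le_of_le_one_sub_mul_sq {x t r : ℝ} (hx : 0 ≤ x) (hr : 0 ≤ r)
    (h : x ≤ (1 - t) * r ^ 2) : √x ≤ (1 - t / 2) * r := by
  refine Real.sqrt_le_iff.mpr ⟨?_, ?_⟩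
  · rcases hr.eq_or_lt with rfl | hr
    · simp
    have ht : 0 ≤ 1 - t := nonneg_of_mul_nonneg_left (hx.trans h) (by positivity)
    exact mul_nonneg (by linarith) hr.le
  · nlinarith [sq_nonneg (t * r)]

theorem td0_checks_lsa_assumptions_general
    (d : ℕ) (γ : ℝ) (hγ : γ ∈ Set.Ioo (0 : ℝ) 1)
    {S : Type} [MeasurableSpace S]
    {Ω : Type} [MeasurableSpace Ω] (P : Measure Ω) [IsProbabilityMeasure P]
    (μ : Measure S)
    (φ : S → Euc d) (hφmeas : Measurable φ) (hφbd : ∀ s, ‖φ s‖ ≤ 1)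
    (S0 S1 : Ω → S) (hS0 : Measurable S0) (hS1 : Measurable S1)
    (hlaw0 : Measure.map S0 P = μ) (hlaw1 : Measure.map S1 P = μ)
    (ν : ℝ) (hν : ν = lambdaMin (featCov P φ S0)) :
    (∀ᵐ ω ∂P, ‖tdMat φ γ S0 S1 ω‖ ≤ 1 + γ) ∧
      ‖∫ ω, (tdMat φ γ S0 S1 ω - ∫ ω', tdMat φ γ S0 S1 ω' ∂P).comp
          (ContinuousLinearMap.adjoint
            (tdMat φ γ S0 S1 ω - ∫ ω', tdMat φ γ S0 S1 ω' ∂P)) ∂P‖ ≤ 2 * (1 + γ) ^ 2 ∧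
      ∀ η ∈ Set.Ioc (0 : ℝ) ((1 - γ) / 4), ∀ u : Euc d,
        Real.sqrt (∫ ω, ‖((1 : Op d) - η • tdMat φ γ S0 S1 ω) u‖ ^ 2 ∂P) ≤
          (1 - η * (1 - γ) * ν / 2) * ‖u‖ := by
  obtain ⟨hγ0, hγ1⟩ := hγ
  have hx : AEStronglyMeasurable (fun ω => φ (S0 ω)) P := (hφmeas.comp hS0).aestronglyMeasurable
  have hy : AEStronglyMeasurable (fun ω => φ (S1 ω)) P := (hφmeas.comp hS1).aestronglyMeasurable
  have hA := norm_tdMat_le hφbd hγ0.le S0 S1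
  refine ⟨ae_of_all _ hA, norm_integral_centered_comp_adjoint_le
    (aestronglyMeasurable_outer2 hx (hx.sub (hy.const_smul γ))) (ae_of_all _ hA), ?_⟩
  rintro η ⟨hη0, hη⟩ u
  have hident : ProbabilityTheory.IdentDistrib S1 S0 P P :=
    ⟨hS1.aemeasurable, hS0.aemeasurable, hlaw1.trans hlaw0.symm⟩
  have hstat : ∫ ω, ⟪φ (S1 ω), u⟫ ^ 2 ∂P = ∫ ω, ⟪φ (S0 ω), u⟫ ^ 2 ∂P :=
    (hident.comp ((hφmeas.inner measurable_const).pow_const 2)).integral_eq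
  have hcov : Integrable (fun ω => outer2 (φ (S0 ω)) (φ (S0 ω))) P :=
    .of_bound (aestronglyMeasurable_outer2 hx hx) 1 (ae_of_all _ fun ω => by
      rw [norm_outer2]; exact mul_le_one₀ (hφbd _) (norm_nonneg _) (hφbd _))
  have hq : ν * ‖u‖ ^ 2 ≤ ∫ ω, ⟪φ (S0 ω), u⟫ ^ 2 ∂P := by
    rw [hν, ← inner_integral_outer2_self_apply hcov]
    exact lambdaMin_mul_sq_le _ u
  have hq0 : 0 ≤ ∫ ω, ⟪φ (S0 ω), u⟫ ^ 2 ∂P := integral_nonneg fun ω => sq_nonneg _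
  have hstep : η * (1 + γ) ^ 2 ≤ 1 - γ :=
    calc η * (1 + γ) ^ 2 ≤ (1 - γ) / 4 * 4 :=
          mul_le_mul hη (by nlinarith) (sq_nonneg _) (by linarith)
      _ = 1 - γ := by ring
  have hcoef : η * (1 - γ) ≤ η * (2 * (1 - γ) - η * (1 + γ) ^ 2) := by nlinarith
  refine sqrt_le_of_le_one_sub_mul_sq (integral_nonneg fun ω => sq_nonneg _) (norm_nonneg u)
    ((integral_norm_one_sub_smul_outer2_apply_sq_le hx hy (fun ω => hφbd _) (fun ω => hφbd _) u
      hstat hγ0.le hη0.le).trans ?_)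
  nlinarith [mul_le_mul_of_nonneg_left hq (mul_nonneg hη0.le (by linarith : 0 ≤ 1 - γ)),
    mul_le_mul_of_nonneg_right hcoef hq0]

/-- TD(0) with linear function approximation satisfies the assumptions of
linear stochastic approximation: (i) `‖A‖ ≤ 1 + γ` a.s.; (ii) `‖Σ_A‖ ≤ 2(1+γ)²`;
(iii) exponential stability with `a = (1−γ)ν/2` for all step sizes `η ∈ (0, (1−γ)/4]`. -/
theorem td0_checks_lsa_assumptions
    (d : ℕ) (hd : 1 ≤ d) (γ : ℝ) (hγ : γ ∈ Set.Ioo (0 : ℝ) 1)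
    {S : Type} [MeasurableSpace S]
    {Ω : Type} [MeasurableSpace Ω] (P : Measure Ω) [IsProbabilityMeasure P]
    (μ : Measure S) [IsProbabilityMeasure μ]
    (φ : S → Euc d) (hφmeas : Measurable φ) (hφbd : ∀ s, ‖φ s‖ ≤ 1)
    (S0 S1 : Ω → S) (hS0 : Measurable S0) (hS1 : Measurable S1)
    (hlaw0 : Measure.map S0 P = μ) (hlaw1 : Measure.map S1 P = μ)
    (ν : ℝ) (hν : ν = lambdaMin (featCov P φ S0)) (hνpos : 0 < ν) :
    (∀ᵐ ω ∂P, ‖tdMat φ γ S0 S1 ω‖ ≤ 1 + γ) ∧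
      ‖∫ ω, (tdMat φ γ S0 S1 ω - ∫ ω', tdMat φ γ S0 S1 ω' ∂P).comp
          (ContinuousLinearMap.adjoint
            (tdMat φ γ S0 S1 ω - ∫ ω', tdMat φ γ S0 S1 ω' ∂P)) ∂P‖ ≤ 2 * (1 + γ) ^ 2 ∧
      ∀ η ∈ Set.Ioc (0 : ℝ) ((1 - γ) / 4), ∀ u : Euc d,
        Real.sqrt (∫ ω, ‖((1 : Op d) - η • tdMat φ γ S0 S1 ω) u‖ ^ 2 ∂P) ≤
          (1 - η * (1 - γ) * ν / 2) * ‖u‖ :=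
  td0_checks_lsa_assumptions_general d γ hγ P μ φ hφmeas hφbd S0 S1 hS0 hS1 hlaw0 hlaw1 ν hν
end
end
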